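/- arXiv:0710.0857 — 3 statements merged into one kernel-verified Lean document; each statement's English description precedes it below -/
import Mathlib

section
/- If ξ is exponentially distributed with rate λ > 0, then the stationary distribution function of the Markov chain x ↦ max(1-x, 1-ξ) on [0,1] is F(x) = (e^{λx} - 1)/(e^{λ} - 1). -/
/-!
The event `max (1 - X) (1 - ξ) ≤ x` is `{1 - x ≤ X} ∩ {1 - x ≤ ξ}`, so by independence its
probability is `(1 - F (1 - x)) * exp (-λ (1 - x))`, which simplifies to `F x`. The only analytic
input is that both distribution functions are continuous, so that `P (t ≤ Y) = 1 - P (Y ≤ t)`.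
-/

open MeasureTheory ProbabilityTheory Filter Topology

section Cdf

variable {Ω : Type*} [MeasurableSpace Ω] {μ : Measure Ω} {Y : Ω → ℝ} {g : ℝ → ℝ}

lemma measureReal_lt_eq_of_cdf [IsFiniteMeasure μ] {t : ℝ}
    (hg : ContinuousWithinAt g (Set.Iio t) t)
    (hcdf : ∀ s < t, μ.real {ω | Y ω ≤ s} = g s) :
    μ.real {ω | Y ω < t} = g t := by
  set u : ℕ → ℝ := fun n ↦ t - 1 / (n + 1)
  have hu_lt : ∀ n, u n < t := fun n ↦ sub_lt_self t Nat.one_div_pos_of_nat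
  have hu_mono : Monotone u := fun m n hmn ↦ sub_le_sub_left (Nat.one_div_le_one_div hmn) t
  have hu_lim : Tendsto u atTop (𝓝 t) := by
    simpa [u] using tendsto_one_div_add_atTop_nhds_zero_nat.const_sub t
  have hunion : ⋃ n, {ω | Y ω ≤ u n} = {ω | Y ω < t} := by
    ext ω
    simp only [Set.mem_iUnion, Set.mem_ofPred_eq]
    refine ⟨fun ⟨n, hn⟩ ↦ hn.trans_lt (hu_lt n), fun h ↦ ?_⟩
    obtain ⟨n, hn⟩ := (hu_lim.eventually (lt_mem_nhds h)).exists
    exact ⟨n, hn.le⟩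
  have hmeas : Tendsto (fun n ↦ μ.real {ω | Y ω ≤ u n}) atTop (𝓝 (μ.real {ω | Y ω < t})) := by
    rw [← hunion]
    exact (ENNReal.tendsto_toReal (measure_ne_top μ _)).comp
      (tendsto_measure_iUnion_atTop fun m n hmn ω hω ↦ le_trans hω (hu_mono hmn))
  have hg_lim : Tendsto (fun n ↦ g (u n)) atTop (𝓝 (g t)) :=
    hg.tendsto.comp (tendsto_nhdsWithin_iff.mpr ⟨hu_lim, Eventually.of_forall hu_lt⟩)
  simp only [hcdf _ (hu_lt _)] at hmeas
  exact tendsto_nhds_unique hmeas hg_lim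

lemma measureReal_le_eq_comp_max [IsFiniteMeasure μ] {a b : ℝ} (hab : a ≤ b)
    (hcdf : ∀ s ∈ Set.Icc a b, μ.real {ω | Y ω ≤ s} = g s) (ha : g a = 0) :
    ∀ s ≤ b, μ.real {ω | Y ω ≤ s} = g (max s a) := by
  intro s hs
  rcases le_total a s with has | hsa
  · rw [max_eq_left has, hcdf s ⟨has, hs⟩]
  · rw [max_eq_right hsa, ha]
    refine measureReal_mono_null
      (Set.ofPred_subset_ofPred.mpr fun ω (hω : Y ω ≤ s) ↦ hω.trans hsa) ?_
    rw [hcdf a ⟨le_rfl, hab⟩, ha]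

lemma measureReal_ge_eq_one_sub_of_cdf [IsProbabilityMeasure μ] (hY : Measurable Y)
    (hg : Continuous g) {a t : ℝ} (hat : a ≤ t)
    (hcdf : ∀ s ∈ Set.Icc a t, μ.real {ω | Y ω ≤ s} = g s) (ha : g a = 0) :
    μ.real {ω | t ≤ Y ω} = 1 - g t := by
  have hcompl : {ω | t ≤ Y ω} = {ω | Y ω < t}ᶜ := by ext; simp
  have hlt : μ.real {ω | Y ω < t} = g (max t a) :=
    measureReal_lt_eq_of_cdf (hg.comp (continuous_id.max continuous_const)).continuousWithinAt
      fun s hs ↦ measureReal_le_eq_comp_max hat hcdf ha s hs.le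
  have hmeas : MeasurableSet {ω | Y ω < t} := hY measurableSet_Iio
  rw [hcompl, probReal_compl_eq_one_sub hmeas, hlt, max_eq_left hat]

end Cdf

lemma one_sub_expCdf_one_sub_mul_exp_neg {lam : ℝ} (hlam : lam ≠ 0) (x : ℝ) :
    (1 - (Real.exp (lam * (1 - x)) - 1) / (Real.exp lam - 1)) * Real.exp (-lam * (1 - x)) =
      (Real.exp (lam * x) - 1) / (Real.exp lam - 1) := by
  have hden : Real.exp lam - 1 ≠ 0 :=
    sub_ne_zero.mpr fun h ↦ hlam (Real.exp_eq_one_iff lam |>.mp h)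
  have hsplit : Real.exp lam = Real.exp (lam * (1 - x)) * Real.exp (lam * x) := by
    rw [← Real.exp_add]; ring_nf
  rw [neg_mul, Real.exp_neg]
  field_simp
  rw [hsplit]
  ring

theorem stmt_7_general {Ω : Type*} [MeasurableSpace Ω] (μ : Measure Ω) [IsProbabilityMeasure μ]
    (lam : ℝ) (hlam : 0 < lam)
    (ξ X : Ω → ℝ) (hξm : Measurable ξ) (hXm : Measurable X)
    (hξcdf : ∀ x : ℝ, 0 ≤ x → (μ {ω | ξ ω ≤ x}).toReal = 1 - Real.exp (-lam * x))
    (F : ℝ → ℝ)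
    (hF : ∀ x, F x = (Real.exp (lam * x) - 1) / (Real.exp lam - 1))
    (hXF : ∀ x ∈ Set.Icc (0 : ℝ) 1, (μ {ω | X ω ≤ x}).toReal = F x)
    (hindep : IndepFun X ξ μ) :
    ∀ x ∈ Set.Icc (0 : ℝ) 1,
      (μ {ω | max (1 - X ω) (1 - ξ ω) ≤ x}).toReal = F x := by
  rintro x ⟨hx0, hx1⟩
  set t := 1 - x
  have ht0 : 0 ≤ t := by linarith
  have hFc : Continuous F := by rw [funext hF]; fun_prop
  have hX : μ.real {ω | t ≤ X ω} = 1 - F t :=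
    measureReal_ge_eq_one_sub_of_cdf hXm hFc ht0
      (fun s hs ↦ hXF s ⟨hs.1, hs.2.trans (by linarith)⟩) (by simp [hF])
  have hξ : μ.real {ω | t ≤ ξ ω} = Real.exp (-lam * t) := by
    rw [measureReal_ge_eq_one_sub_of_cdf hξm (by fun_prop) ht0 (fun s hs ↦ hξcdf s hs.1)
      (by simp)]
    ring
  have hevent : {ω | max (1 - X ω) (1 - ξ ω) ≤ x} = {ω | t ≤ X ω} ∩ {ω | t ≤ ξ ω} := by
    ext ω
    simp only [max_le_iff, Set.mem_ofPred_eq, Set.mem_inter_iff, t]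
    constructor <;> rintro ⟨h₁, h₂⟩ <;> constructor <;> linarith
  have hmul : μ ({ω | t ≤ X ω} ∩ {ω | t ≤ ξ ω}) = μ {ω | t ≤ X ω} * μ {ω | t ≤ ξ ω} :=
    hindep.measure_inter_preimage_eq_mul _ _ measurableSet_Ici measurableSet_Ici
  calc (μ {ω | max (1 - X ω) (1 - ξ ω) ≤ x}).toReal
      = μ.real {ω | t ≤ X ω} * μ.real {ω | t ≤ ξ ω} := by
        rw [hevent, hmul, ENNReal.toReal_mul]; rfl
    _ = F x := by rw [hX, hξ, hF, hF]; exact one_sub_expCdf_one_sub_mul_exp_neg hlam.ne' x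

theorem stmt_7 {Ω : Type*} [MeasurableSpace Ω] (μ : Measure Ω) [IsProbabilityMeasure μ]
    (lam : ℝ) (hlam : 0 < lam)
    (ξ X : Ω → ℝ) (hξm : Measurable ξ) (hXm : Measurable X)
    (hξpos : ∀ᵐ ω ∂μ, 0 < ξ ω)
    (hξcdf : ∀ x : ℝ, 0 ≤ x → (μ {ω | ξ ω ≤ x}).toReal = 1 - Real.exp (-lam * x))
    (F : ℝ → ℝ)
    (hF : ∀ x, F x = (Real.exp (lam * x) - 1) / (Real.exp lam - 1))
    (hX01 : ∀ᵐ ω ∂μ, X ω ∈ Set.Icc (0 : ℝ) 1)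
    (hXF : ∀ x ∈ Set.Icc (0 : ℝ) 1, (μ {ω | X ω ≤ x}).toReal = F x)
    (hindep : IndepFun X ξ μ) :
    ∀ x ∈ Set.Icc (0 : ℝ) 1,
      (μ {ω | max (1 - X ω) (1 - ξ ω) ≤ x}).toReal = F x :=
  stmt_7_general μ lam hlam ξ X hξm hXm hξcdf F hF hXF hindep
end

section
/- If X^L, X^R are i.i.d. with distribution function F(x) = (e^{λx}-1)/(e^{λ}-1) on [0,1] and ξ ~ Exp(λ) independent, then E[ξ·1(ξ < min(X^L, X^R))] = (e^{2λ} - (λ² + 2)e^{λ} + 1)/(λ(e^{λ} - 1)²). -/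
/-!
By independence the joint law of `(ξ, X^L, X^R)` is a product, and Fubini (integrating out
`X^L, X^R` first) gives `E[ξ; ξ < min(X^L, X^R)] = ∫ u · P(X^L > u) P(X^R > u) dP_ξ(u)`.
The law of `ξ` is `expMeasure λ` (same c.d.f.) and `1 - F` vanishes beyond `1`, so this is the
elementary integral `∫₀¹ u (1 - F u)² λ e^{-λu} du`, which expands into integrals of `u e^{au}`.
-/

open MeasureTheory ProbabilityTheory Set Real
open scoped ENNReal

lemma setLIntegral_lt_min_eq_lintegral_map {Ω : Type*} [MeasurableSpace Ω] {μ : Measure Ω}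
    [IsFiniteMeasure μ] {X Y Z : Ω → ℝ} (hX : Measurable X) (hY : Measurable Y)
    (hZ : Measurable Z) (hXYZ : iIndepFun ![X, Y, Z] μ) {h : ℝ → ℝ≥0∞} (hh : Measurable h) :
    ∫⁻ ω in {ω | Z ω < min (X ω) (Y ω)}, h (Z ω) ∂μ
      = ∫⁻ z, h z * (μ {ω | z < X ω} * μ {ω | z < Y ω}) ∂μ.map Z := by
  have hmeas : ∀ i, Measurable (![X, Y, Z] i) := fun i => by fin_cases i <;> assumption
  have hXY : IndepFun X Y μ := hXYZ.indepFun (show (0 : Fin 3) ≠ 1 by decide)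
  have hZXY : IndepFun Z (fun ω => (X ω, Y ω)) μ :=
    (hXYZ.indepFun_prodMk hmeas 0 1 2 (by decide) (by decide)).symm
  have hlaw : μ.map (fun ω => (Z ω, X ω, Y ω)) = (μ.map Z).prod ((μ.map X).prod (μ.map Y)) := by
    rw [(indepFun_iff_map_prod_eq_prod_map_map hZ.aemeasurable
        (hX.prodMk hY).aemeasurable).mp hZXY,
      (indepFun_iff_map_prod_eq_prod_map_map hX.aemeasurable hY.aemeasurable).mp hXY]
  set S : Set (ℝ × ℝ × ℝ) := {p | p.1 < min p.2.1 p.2.2}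
  have hS : MeasurableSet S :=
    measurableSet_lt measurable_fst (measurable_snd.fst.min measurable_snd.snd)
  have hW : Measurable fun ω => (Z ω, X ω, Y ω) := hZ.prodMk (hX.prodMk hY)
  have hf : Measurable fun p : ℝ × ℝ × ℝ => h p.1 := hh.comp measurable_fst
  have hsection : ∀ z : ℝ, (fun q : ℝ × ℝ => S.indicator (fun p => h p.1) (z, q))
      = (Ioi z ×ˢ Ioi z).indicator fun _ => h z := by
    intro z
    ext q
    simp only [S, indicator, lt_min_iff, mem_prod, mem_Ioi]
    rfl
  calc ∫⁻ ω in {ω | Z ω < min (X ω) (Y ω)}, h (Z ω) ∂μ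
      = ∫⁻ p in S, h p.1 ∂(μ.map Z).prod ((μ.map X).prod (μ.map Y)) := by
        rw [← hlaw, setLIntegral_map hS hf hW]; rfl
    _ = ∫⁻ z, h z * (μ {ω | z < X ω} * μ {ω | z < Y ω}) ∂μ.map Z := by
        rw [← lintegral_indicator hS, lintegral_prod _ (hf.indicator hS).aemeasurable]
        refine lintegral_congr fun z => ?_
        rw [hsection, lintegral_indicator_const (measurableSet_Ioi.prod measurableSet_Ioi),
          Measure.prod_prod, Measure.map_apply hX measurableSet_Ioi,
          Measure.map_apply hY measurableSet_Ioi]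
        rfl

lemma map_eq_expMeasure_of_cdf {Ω : Type*} [MeasurableSpace Ω] {μ : Measure Ω}
    [IsProbabilityMeasure μ] {ξ : Ω → ℝ} (hξ : Measurable ξ) {r : ℝ} (hr : 0 < r)
    (hcdf : ∀ x, 0 ≤ x → (μ {ω | ξ ω ≤ x}).toReal = 1 - exp (-r * x)) :
    μ.map ξ = expMeasure r := by
  have := Measure.isProbabilityMeasure_map (μ := μ) hξ.aemeasurable
  have := isProbabilityMeasure_expMeasure hr
  refine Measure.eq_of_cdf _ _ ?_
  ext x
  have hcdf' : ∀ x, 0 ≤ x → cdf (μ.map ξ) x = 1 - exp (-(r * x)) := fun x hx => by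
    rw [cdf_eq_real, map_measureReal_apply hξ measurableSet_Iic, neg_mul_eq_neg_mul]
    exact hcdf x hx
  rw [cdf_expMeasure_eq hr]
  split_ifs with hx
  · exact hcdf' x hx
  · refine le_antisymm ?_ (cdf_nonneg _ x)
    calc cdf (μ.map ξ) x ≤ cdf (μ.map ξ) 0 := monotone_cdf _ (not_le.mp hx).le
      _ = 0 := by simp [hcdf' 0 le_rfl]

lemma measure_lt_eq_ofReal_one_sub {Ω : Type*} [MeasurableSpace Ω] {μ : Measure Ω}
    [IsProbabilityMeasure μ] {X : Ω → ℝ} (hX : Measurable X) {x p : ℝ}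
    (hp : (μ {ω | X ω ≤ x}).toReal = p) : μ {ω | x < X ω} = ENNReal.ofReal (1 - p) := by
  have hcompl : {ω | x < X ω} = {ω | X ω ≤ x}ᶜ := by ext; simp
  rw [← ENNReal.ofReal_toReal (measure_ne_top μ _), hcompl, ← measureReal_def,
    probReal_compl_eq_one_sub (measurableSet_le hX measurable_const), measureReal_def, hp]

lemma ofReal_mul_measure_lt_mul_measure_lt_eq_indicator {Ω : Type*} [MeasurableSpace Ω]
    {μ : Measure Ω} [IsProbabilityMeasure μ] {X Y : Ω → ℝ} (hX : Measurable X)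
    (hY : Measurable Y) {F : ℝ → ℝ} (hF1 : F 1 = 1)
    (hXF : ∀ x ∈ Icc (0 : ℝ) 1, (μ {ω | X ω ≤ x}).toReal = F x)
    (hYF : ∀ x ∈ Icc (0 : ℝ) 1, (μ {ω | Y ω ≤ x}).toReal = F x) :
    (fun u => ENNReal.ofReal u * (μ {ω | u < X ω} * μ {ω | u < Y ω}))
      = (Ioc 0 1).indicator fun u => ENNReal.ofReal (u * (1 - F u) ^ 2) := by
  ext u
  by_cases hu : u ∈ Ioc 0 1
  · have hu' : u ∈ Icc (0 : ℝ) 1 := Ioc_subset_Icc_self hu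
    have hF : 0 ≤ 1 - F u := by
      rw [← hXF u hu', sub_nonneg]
      exact ENNReal.toReal_le_of_le_ofReal zero_le_one (by simpa using prob_le_one)
    rw [indicator_of_mem hu, measure_lt_eq_ofReal_one_sub hX (hXF u hu'),
      measure_lt_eq_ofReal_one_sub hY (hYF u hu'), ← ENNReal.ofReal_mul hF,
      ← ENNReal.ofReal_mul hu.1.le, sq]
  · rw [indicator_of_notMem hu]
    rcases le_or_gt u 0 with hu0 | hu0
    · simp [ENNReal.ofReal_of_nonpos hu0]
    · have hX1 : μ {ω | 1 < X ω} = 0 := by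
        simpa [hF1] using measure_lt_eq_ofReal_one_sub hX (hXF 1 ⟨zero_le_one, le_rfl⟩)
      have hXu : μ {ω | u < X ω} = 0 :=
        measure_mono_null (fun ω (h : u < X ω) => (not_le.mp fun h1 => hu ⟨hu0, h1⟩).trans h) hX1
      simp [hXu]

lemma setLIntegral_Ioc_expMeasure {r : ℝ} (hr : 0 ≤ r) {k : ℝ → ℝ} (hk : Continuous k)
    (hk0 : ∀ u ∈ Ioc (0 : ℝ) 1, 0 ≤ k u) :
    ∫⁻ u in Ioc 0 1, ENNReal.ofReal (k u) ∂expMeasure r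
      = ENNReal.ofReal (∫ u in (0 : ℝ)..1, k u * (r * exp (-(r * u)))) := by
  have hpdf : Measurable (exponentialPDF r) :=
    ENNReal.measurable_ofReal.comp (measurable_exponentialPDFReal r)
  have hexp : expMeasure r = volume.withDensity (exponentialPDF r) := rfl
  have hkm : Measurable fun u => ENNReal.ofReal (k u) := hk.measurable.ennreal_ofReal
  rw [hexp, setLIntegral_withDensity_eq_setLIntegral_mul _ hpdf hkm measurableSet_Ioc,
    intervalIntegral.integral_of_le zero_le_one, ofReal_integral_eq_lintegral_ofReal]
  · refine setLIntegral_congr_fun measurableSet_Ioc fun u hu => ?_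
    rw [Pi.mul_apply, exponentialPDF_of_nonneg hu.1.le, mul_comm,
      ENNReal.ofReal_mul (hk0 u hu)]
  · exact (by fun_prop : Continuous fun u => k u * (r * exp (-(r * u)))).integrableOn_Ioc
  · exact (ae_restrict_iff' measurableSet_Ioc).mpr (.of_forall fun u hu =>
      mul_nonneg (hk0 u hu) (by positivity))

lemma integral_mul_exp_mul {a : ℝ} (ha : a ≠ 0) (x : ℝ) :
    ∫ u in (0 : ℝ)..x, u * exp (a * u) = (exp (a * x) * (a * x - 1) + 1) / a ^ 2 := by
  have hderiv : ∀ u ∈ uIcc 0 x,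
      HasDerivAt (fun u => (a * u - 1) / a ^ 2 * exp (a * u)) (u * exp (a * u)) u := by
    intro u _
    have hlin : HasDerivAt (fun u => a * u) a u := by simpa using (hasDerivAt_id u).const_mul a
    refine ((hlin.sub_const 1).div_const (a ^ 2)).mul hlin.exp |>.congr_deriv ?_
    field_simp
    ring
  rw [intervalIntegral.integral_eq_sub_of_hasDerivAt hderiv
    ((by fun_prop : Continuous fun u => u * exp (a * u)).intervalIntegrable _ _)]
  field_simp
  simp only [mul_zero, exp_zero]
  ring

noncomputable def truncExpCDF (lam x : ℝ) : ℝ := (exp (lam * x) - 1) / (exp lam - 1)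

lemma truncExpCDF_one {lam : ℝ} (hlam : lam ≠ 0) : truncExpCDF lam 1 = 1 := by
  have : exp lam - 1 ≠ 0 := by simpa [sub_eq_zero] using hlam
  simp [truncExpCDF, div_self this]

lemma one_sub_truncExpCDF {lam : ℝ} (hlam : lam ≠ 0) (x : ℝ) :
    1 - truncExpCDF lam x = (exp lam - exp (lam * x)) / (exp lam - 1) := by
  have hL : exp lam - 1 ≠ 0 := by simpa [sub_eq_zero] using hlam
  rw [truncExpCDF]
  field_simp
  ring

lemma integral_mul_one_sub_truncExpCDF_sq_mul_exp {lam : ℝ} (hlam : lam ≠ 0) :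
    ∫ u in (0 : ℝ)..1, u * (1 - truncExpCDF lam u) ^ 2 * (lam * exp (-(lam * u)))
      = (exp (2 * lam) - (lam ^ 2 + 2) * exp lam + 1) / (lam * (exp lam - 1) ^ 2) := by
  have hL : exp lam - 1 ≠ 0 := by simpa [sub_eq_zero] using hlam
  have hexpand : (fun u => u * (1 - truncExpCDF lam u) ^ 2 * (lam * exp (-(lam * u))))
      = fun u => lam * exp lam ^ 2 / (exp lam - 1) ^ 2 * (u * exp (-lam * u))
          + (-2 * lam * exp lam / (exp lam - 1) ^ 2 * u
            + lam / (exp lam - 1) ^ 2 * (u * exp (lam * u))) := by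
    funext u
    have hinv : exp (-lam * u) * exp (lam * u) = 1 := by rw [← exp_add]; simp
    rw [one_sub_truncExpCDF hlam, div_pow, ← neg_mul]
    linear_combination (lam * u * ((exp lam - 1) ^ 2)⁻¹ * (exp (lam * u) - 2 * exp lam)) * hinv
  have hint : ∀ c : ℝ, IntervalIntegrable (fun u => u * exp (c * u)) volume 0 1 := fun c =>
    (by fun_prop : Continuous fun u => u * exp (c * u)).intervalIntegrable _ _
  have hid : IntervalIntegrable (fun u : ℝ => u) volume 0 1 :=
    continuous_id.intervalIntegrable _ _
  rw [hexpand, intervalIntegral.integral_add ((hint _).const_mul _)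
      ((hid.const_mul _).add ((hint _).const_mul _)),
    intervalIntegral.integral_add (hid.const_mul _) ((hint _).const_mul _),
    intervalIntegral.integral_const_mul, intervalIntegral.integral_const_mul,
    intervalIntegral.integral_const_mul, integral_mul_exp_mul (neg_ne_zero.mpr hlam),
    integral_mul_exp_mul hlam, integral_id]
  have h2 : exp (2 * lam) = exp lam ^ 2 := by rw [two_mul, exp_add]; ring
  have hneg : exp (-lam) * exp lam = 1 := by rw [← exp_add]; simp
  rw [h2, mul_one, mul_one]
  field_simp
  linear_combination (-(lam + 1) * exp lam) * hneg

theorem stmt_9_general {Ω : Type*} [MeasurableSpace Ω] (μ : Measure Ω) [IsProbabilityMeasure μ]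
    (lam : ℝ) (hlam : 0 < lam)
    (XL XR ξv : Ω → ℝ)
    (hXLm : Measurable XL) (hXRm : Measurable XR) (hξm : Measurable ξv)
    (hindep : iIndepFun
      ![XL, XR, ξv] μ)
    (hXL : ∀ x ∈ Set.Icc (0 : ℝ) 1,
      (μ {ω | XL ω ≤ x}).toReal = (Real.exp (lam * x) - 1) / (Real.exp lam - 1))
    (hXR : ∀ x ∈ Set.Icc (0 : ℝ) 1,
      (μ {ω | XR ω ≤ x}).toReal = (Real.exp (lam * x) - 1) / (Real.exp lam - 1))
    (hξcdf : ∀ x : ℝ, 0 ≤ x → (μ {ω | ξv ω ≤ x}).toReal = 1 - Real.exp (-lam * x)) :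
    ∫ ω in {ω | ξv ω < min (XL ω) (XR ω)}, ξv ω ∂μ
      = (Real.exp (2 * lam) - (lam ^ 2 + 2) * Real.exp lam + 1)
          / (lam * (Real.exp lam - 1) ^ 2) := by
  have hξ0 : ∀ᵐ ω ∂μ, 0 ≤ ξv ω := by
    have h0 : μ {ω | ξv ω ≤ 0} = 0 :=
      ((ENNReal.toReal_eq_zero_iff _).mp (by simpa using hξcdf 0 le_rfl)).resolve_right
        (measure_ne_top _ _)
    filter_upwards [measure_eq_zero_iff_ae_notMem.mp h0] with ω hω
    exact (not_le.mp hω).le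
  have hk : Continuous fun u => u * (1 - truncExpCDF lam u) ^ 2 := by
    unfold truncExpCDF; fun_prop
  have hk0 : ∀ u ∈ Ioc (0 : ℝ) 1, 0 ≤ u * (1 - truncExpCDF lam u) ^ 2 := fun u hu =>
    mul_nonneg hu.1.le (sq_nonneg _)
  calc ∫ ω in {ω | ξv ω < min (XL ω) (XR ω)}, ξv ω ∂μ
      = (∫⁻ ω in {ω | ξv ω < min (XL ω) (XR ω)}, ENNReal.ofReal (ξv ω) ∂μ).toReal :=
        integral_eq_lintegral_of_nonneg_ae (ae_restrict_of_ae hξ0) hξm.aestronglyMeasurable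
    _ = (∫⁻ u in Ioc 0 1, ENNReal.ofReal (u * (1 - truncExpCDF lam u) ^ 2)
          ∂expMeasure lam).toReal := by
        rw [setLIntegral_lt_min_eq_lintegral_map hXLm hXRm hξm hindep
            ENNReal.measurable_ofReal, map_eq_expMeasure_of_cdf hξm hlam hξcdf,
          ofReal_mul_measure_lt_mul_measure_lt_eq_indicator hXLm hXRm
            (truncExpCDF_one hlam.ne') hXL hXR, lintegral_indicator measurableSet_Ioc]
    _ = ∫ u in (0 : ℝ)..1, u * (1 - truncExpCDF lam u) ^ 2 * (lam * exp (-(lam * u))) := by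
        rw [setLIntegral_Ioc_expMeasure hlam.le hk hk0, ENNReal.toReal_ofReal]
        exact intervalIntegral.integral_nonneg zero_le_one fun u hu =>
          mul_nonneg (mul_nonneg hu.1 (sq_nonneg _)) (by positivity)
    _ = _ := integral_mul_one_sub_truncExpCDF_sq_mul_exp hlam.ne'

theorem stmt_9 {Ω : Type*} [MeasurableSpace Ω] (μ : Measure Ω) [IsProbabilityMeasure μ]
    (lam : ℝ) (hlam : 0 < lam)
    (XL XR ξv : Ω → ℝ)
    (hXLm : Measurable XL) (hXRm : Measurable XR) (hξm : Measurable ξv)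
    (hindep : iIndepFun
      ![XL, XR, ξv] μ)
    (hXL01 : ∀ᵐ ω ∂μ, XL ω ∈ Set.Icc (0 : ℝ) 1)
    (hXR01 : ∀ᵐ ω ∂μ, XR ω ∈ Set.Icc (0 : ℝ) 1)
    (hXL : ∀ x ∈ Set.Icc (0 : ℝ) 1,
      (μ {ω | XL ω ≤ x}).toReal = (Real.exp (lam * x) - 1) / (Real.exp lam - 1))
    (hXR : ∀ x ∈ Set.Icc (0 : ℝ) 1,
      (μ {ω | XR ω ≤ x}).toReal = (Real.exp (lam * x) - 1) / (Real.exp lam - 1))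
    (hξpos : ∀ᵐ ω ∂μ, 0 < ξv ω)
    (hξcdf : ∀ x : ℝ, 0 ≤ x → (μ {ω | ξv ω ≤ x}).toReal = 1 - Real.exp (-lam * x)) :
    ∫ ω in {ω | ξv ω < min (XL ω) (XR ω)}, ξv ω ∂μ
      = (Real.exp (2 * lam) - (lam ^ 2 + 2) * Real.exp lam + 1)
          / (lam * (Real.exp lam - 1) ^ 2) :=
  stmt_9_general μ lam hlam XL XR ξv hXLm hXRm hξm hindep hXL hXR hξcdf
end

section
/- Let V ≥ 0 be a real-valued random variable such that P(0 < V < x) ≤ C·x for all x > 0, where C > 0. Then E[V] ≥ (P(V > 0))²/(2C). -/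
/-!
Split `{0 < V}` at a level `t > 0`: the part `{0 < V ≤ t}` has measure at most `C t`, so
`P(V > t) ≥ P(V > 0) - C t`. Integrating this over `0 < t ≤ P(V > 0) / C` and comparing with the
layer-cake formula `E[V] = ∫_{t > 0} P(V > t) dt` gives the triangle area `P(V > 0)² / (2C)`.
-/

open MeasureTheory Set ENNReal

section
variable {Ω : Type*} [MeasurableSpace Ω] {μ : Measure Ω} {V : Ω → ℝ} {C : ℝ}

lemma toReal_measure_pos_le_le_of_lt (hC : 0 < C)
    (hP : ∀ x : ℝ, 0 < x → (μ {ω | 0 < V ω ∧ V ω < x}).toReal ≤ C * x)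
    (hfin : μ {ω | 0 < V ω} ≠ ∞) {t : ℝ} (ht : 0 ≤ t) :
    (μ {ω | 0 < V ω ∧ V ω ≤ t}).toReal ≤ C * t := by
  refine le_of_forall_gt_imp_ge_of_dense fun y hy => ?_
  have hx : t < y / C := (lt_div_iff₀ hC).2 (by linarith)
  calc (μ {ω | 0 < V ω ∧ V ω ≤ t}).toReal
      ≤ (μ {ω | 0 < V ω ∧ V ω < y / C}).toReal :=
        toReal_mono (measure_ne_top_of_subset (fun ω h => h.1) hfin)
          (measure_mono fun ω h => ⟨h.1, h.2.trans_lt hx⟩)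
    _ ≤ C * (y / C) := hP _ (ht.trans_lt hx)
    _ = y := mul_div_cancel₀ y hC.ne'

lemma ofReal_sub_mul_le_measure_lt (hC : 0 < C)
    (hP : ∀ x : ℝ, 0 < x → (μ {ω | 0 < V ω ∧ V ω < x}).toReal ≤ C * x) {t : ℝ} (ht : 0 < t) :
    ENNReal.ofReal ((μ {ω | 0 < V ω}).toReal - C * t) ≤ μ {ω | t < V ω} := by
  by_cases hfin : μ {ω | 0 < V ω} = ∞
  · -- `∞.toReal = 0`, so the left side vanishes.
    simp [hfin, ENNReal.ofReal_of_nonpos (by nlinarith : -(C * t) ≤ 0)]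
  have hlt : μ {ω | t < V ω} ≠ ∞ :=
    measure_ne_top_of_subset (fun ω (h : t < V ω) => ht.trans h) hfin
  have hle : μ {ω | 0 < V ω ∧ V ω ≤ t} ≠ ∞ := measure_ne_top_of_subset (fun ω h => h.1) hfin
  have hsplit : μ {ω | 0 < V ω} ≤ μ {ω | t < V ω} + μ {ω | 0 < V ω ∧ V ω ≤ t} :=
    (measure_mono fun ω (h : 0 < V ω) => (lt_or_ge t (V ω)).imp id fun h' => ⟨h, h'⟩).trans
      (measure_union_le _ _)
  have hsplit' := toReal_mono (add_ne_top.2 ⟨hlt, hle⟩) hsplit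
  rw [toReal_add hlt hle] at hsplit'
  rw [ENNReal.ofReal_le_iff_le_toReal hlt]
  linarith [toReal_measure_pos_le_le_of_lt hC hP hfin ht.le]

end

lemma lintegral_Ioc_ofReal_sub_mul {p C : ℝ} (hp : 0 ≤ p) (hC : 0 < C) :
    ∫⁻ t in Ioc 0 (p / C), ENNReal.ofReal (p - C * t) = ENNReal.ofReal (p ^ 2 / (2 * C)) := by
  have hpC : 0 ≤ p / C := div_nonneg hp hC.le
  have hint : ∫ t in 0..p / C, (p - C * t) = p ^ 2 / (2 * C) := by
    rw [intervalIntegral.integral_sub intervalIntegrable_const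
      (intervalIntegral.intervalIntegrable_id.const_mul C), intervalIntegral.integral_const_mul,
      integral_id, intervalIntegral.integral_const, smul_eq_mul]
    field_simp
    ring
  rw [← hint, intervalIntegral.integral_of_le hpC, ofReal_integral_eq_lintegral_ofReal]
  · exact (continuous_const.sub (continuous_const.mul continuous_id)).integrableOn_Ioc
  · refine (ae_restrict_iff' measurableSet_Ioc).2 (.of_forall fun t ht => ?_)
    exact sub_nonneg.2 ((le_div_iff₀' hC).1 ht.2)

theorem stmt_18_general {Ω : Type*} [MeasurableSpace Ω] (μ : Measure Ω)
    (V : Ω → ℝ) (hVm : Measurable V) (hV0 : ∀ ω, 0 ≤ V ω)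
    (C : ℝ) (hC : 0 < C)
    (hP : ∀ x : ℝ, 0 < x → (μ {ω | 0 < V ω ∧ V ω < x}).toReal ≤ C * x) :
    ENNReal.ofReal ((μ {ω | 0 < V ω}).toReal ^ 2 / (2 * C))
      ≤ ∫⁻ ω, ENNReal.ofReal (V ω) ∂μ := by
  set p := (μ {ω | 0 < V ω}).toReal
  calc ENNReal.ofReal (p ^ 2 / (2 * C))
      = ∫⁻ t in Ioc 0 (p / C), ENNReal.ofReal (p - C * t) :=
        (lintegral_Ioc_ofReal_sub_mul toReal_nonneg hC).symm
    _ ≤ ∫⁻ t in Ioc 0 (p / C), μ {ω | t < V ω} :=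
        setLIntegral_mono' measurableSet_Ioc fun t ht => ofReal_sub_mul_le_measure_lt hC hP ht.1
    _ ≤ ∫⁻ t in Ioi 0, μ {ω | t < V ω} := lintegral_mono_set Ioc_subset_Ioi_self
    _ = ∫⁻ ω, ENNReal.ofReal (V ω) ∂μ :=
        (lintegral_eq_lintegral_meas_lt μ (.of_forall hV0) hVm.aemeasurable).symm

theorem stmt_18 {Ω : Type*} [MeasurableSpace Ω] (μ : Measure Ω) [IsProbabilityMeasure μ]
    (V : Ω → ℝ) (hVm : Measurable V) (hV0 : ∀ ω, 0 ≤ V ω)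
    (C : ℝ) (hC : 0 < C)
    (hP : ∀ x : ℝ, 0 < x → (μ {ω | 0 < V ω ∧ V ω < x}).toReal ≤ C * x) :
    ENNReal.ofReal ((μ {ω | 0 < V ω}).toReal ^ 2 / (2 * C))
      ≤ ∫⁻ ω, ENNReal.ofReal (V ω) ∂μ :=
  stmt_18_general μ V hVm hV0 C hC hP
end
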